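/- arXiv:2303.12124 — 2 statements merged into one kernel-verified Lean document; each statement's English description precedes it below -/
import Mathlib

section
/- The map Ψ_trop is a bijection: for a field K of characteristic 0 with a valuation v_K : K → 𝕋, the map Ψ_trop : (𝕋^ℕ)ⁿ → 𝕋[[t]]ⁿ given coordinatewise by (b_j)_{j∈ℕ} ↦ ∑_j (b_j − v_K(j!·1_K))·tʲ is bijective, its inverse sending S ∈ 𝕋[[t]] (coordinatewise) to the sequence whose j-th entry is the constant coefficient (coefficient of t⁰) of d_vʲ(S). Moreover the square commutes: for every a = ((a_{i,j})_j)_i ∈ (K^ℕ)ⁿ one has trop_ṽ(Ψ(a)) = Ψ_trop((v_K(a_{i,j}))_{i,j}). -/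
open scoped Classical ENNReal
open Filter
set_option synthInstance.maxHeartbeats 1000000
set_option maxHeartbeats 1000000

noncomputable section
namespace TropDiff

/-- The tropical semiring 𝕋 = ℝ ∪ {∞} with addition min and multiplication +,
modelled as `WithTop ℝ` (so that the tropical sum is `min` and the tropical
product is `+`). -/
abbrev TT : Type := WithTop ℝ

/-- Tropical power series 𝕋[[t]], modelled by their coefficient functions. -/
abbrev TSeries : Type := ℕ → TT

/-- 𝕋₂ = ℝ² ∪ {∞}, with addition the lexicographic minimum (i.e. the lattice
`min` of `WithTop (ℝ ×ₗ ℝ)`) and multiplication the componentwise sum `+`. -/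
abbrev T2 : Type := WithTop (ℝ ×ₗ ℝ)

/-- `vK : K → 𝕋` is a valuation: v(a) = ∞ iff a = 0, v(ab) = v(a)+v(b) and
v(a+b) ≥ min (v(a), v(b)). -/
structure IsVal (K : Type) [Field K] (vK : K → TT) : Prop where
  eq_top_iff : ∀ a : K, vK a = ⊤ ↔ a = 0
  map_mul : ∀ a b : K, vK (a * b) = vK a + vK b
  min_le_add : ∀ a b : K, min (vK a) (vK b) ≤ vK (a + b)

variable {K : Type} [Field K]

/-- Ritt's differential polynomial ring K[[t]]{x₁,…,xₙ}: the polynomial ring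
over K[[t]] in the variables x_i^{(j)}, i ∈ Fin n, j ∈ ℕ. -/
abbrev DP (K : Type) [Field K] (n : ℕ) : Type := MvPolynomial (Fin n × ℕ) (PowerSeries K)

/-- Coefficientwise tropicalization ṽ : K[[t]] → 𝕋[[t]]. -/
def tropS (vK : K → TT) (g : PowerSeries K) : TSeries := fun j => vK (PowerSeries.coeff (R := K) j g)

/-- The tropical differential d_v on 𝕋[[t]]:
d_v(∑ cₙtⁿ) = ∑ (v_K((n+1)·1_K) + c_{n+1}) tⁿ. -/
def dv (vK : K → TT) (S : TSeries) : TSeries := fun j => vK ((j + 1 : ℕ) : K) + S (j + 1)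

/-- Φ : 𝕋[[t]] → 𝕋₂, S ↦ (n₀, c_{n₀}) where n₀ is the least index with
c_{n₀} ≠ ∞; the all-∞ series goes to ∞. -/
def Phi (S : TSeries) : T2 :=
  if h : ∃ j, S j ≠ ⊤ then
    ((toLex ((Nat.find h : ℝ), WithTop.untopD 0 (S (Nat.find h))) : ℝ ×ₗ ℝ) : T2)
  else ⊤

/-- The rank-2 valuation v : K[[t]] → 𝕋₂, v(∑ aₙ tⁿ) = (n₀, v_K(a_{n₀})) where
n₀ is the least index with a_{n₀} ≠ 0, and v(0) = ∞. -/
def valT2 (vK : K → TT) (g : PowerSeries K) : T2 :=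
  if h : ∃ j, PowerSeries.coeff (R := K) j g ≠ 0 then
    ((toLex ((Nat.find h : ℝ),
        WithTop.untopD 0 (vK (PowerSeries.coeff (R := K) (Nat.find h) g))) : ℝ ×ₗ ℝ) : T2)
  else ⊤

/-- The tropical weight ∑_{i,j} λ_{i,j}·Φ(d_vʲ(S_i)) of the differential
monomial with exponents λ = m. -/
def mweight {n : ℕ} (vK : K → TT) (S : Fin n → TSeries) (m : (Fin n × ℕ) →₀ ℕ) : T2 :=
  m.support.sum fun ij => m ij • Phi ((dv vK)^[ij.2] (S ij.1))

/-- trop_v(f)(S): the lexicographic minimum, over the monomials λ of f, of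
v(A_λ) + ∑_{i,j} λ_{i,j}·Φ(d_vʲ(S_i)). -/
def tropEval {n : ℕ} (vK : K → TT) (f : DP K n) (S : Fin n → TSeries) : T2 :=
  f.support.inf fun m => valT2 vK (MvPolynomial.coeff m f) + mweight vK S m

/-- S is a tropical solution of trop_v(f): the minimum is ∞ or is attained by
at least two distinct monomials of f. -/
def IsTropSol {n : ℕ} (vK : K → TT) (f : DP K n) (S : Fin n → TSeries) : Prop :=
  tropEval vK f S = ⊤ ∨
  ∃ m₁ ∈ f.support, ∃ m₂ ∈ f.support, m₁ ≠ m₂ ∧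
    valT2 vK (MvPolynomial.coeff m₁ f) + mweight vK S m₁ = tropEval vK f S ∧
    valT2 vK (MvPolynomial.coeff m₂ f) + mweight vK S m₂ = tropEval vK f S

/-- Ψ : (K^ℕ)ⁿ → K[[t]]ⁿ, a ↦ (∑_j (a_{i,j}/j!)·tʲ)_i. -/
def Psi {n : ℕ} (a : Fin n → ℕ → K) : Fin n → PowerSeries K :=
  fun i => PowerSeries.mk fun j => a i j / ((Nat.factorial j : ℕ) : K)

/-- Ψ_trop : (𝕋^ℕ)ⁿ → 𝕋[[t]]ⁿ, b ↦ (∑_j (b_{i,j} − v_K(j!))·tʲ)_i, with the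
convention ∞ − v_K(j!) = ∞. -/
def PsiTrop (vK : K → TT) {n : ℕ} (b : Fin n → ℕ → TT) : Fin n → TSeries :=
  fun i j => b i j + WithTop.map (fun r : ℝ => -r) (vK ((Nat.factorial j : ℕ) : K))

lemma aux_vK_one {vK : K → TT} (hv : IsVal K vK) : vK 1 = 0 := by
  have h := hv.map_mul 1 1
  rw [one_mul] at h
  have hne : vK 1 ≠ ⊤ := by simp only [ne_eq, hv.eq_top_iff]; exact one_ne_zero
  obtain ⟨r, hr⟩ := WithTop.ne_top_iff_exists.mp hne
  rw [← hr] at h ⊢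
  have : r = r + r := by exact_mod_cast h
  have : r = 0 := by linarith
  simp [this]

lemma aux_cancel (r : ℝ) (x : TT) : (r : TT) + (x + ((-r : ℝ) : TT)) = x := by
  cases x using WithTop.recTopCoe with
  | top => simp
  | coe s => norm_cast; ring

lemma aux_dv_iter {vK : K → TT} (hv : IsVal K vK) (j : ℕ) (S : TSeries) :
    ((dv vK)^[j] S) 0 = vK ((Nat.factorial j : ℕ) : K) + S j := by
  induction j generalizing S with
  | zero => simp [Nat.factorial, aux_vK_one hv]
  | succ j ih =>
      rw [Function.iterate_succ_apply, ih (dv vK S)]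
      show vK _ + (vK _ + S (j + 1)) = _
      rw [← add_assoc, ← hv.map_mul]
      congr 2
      push_cast [Nat.factorial_succ]
      ring

lemma aux_vK_fact_ne_top [CharZero K] {vK : K → TT} (hv : IsVal K vK) (j : ℕ) :
    vK ((Nat.factorial j : ℕ) : K) ≠ ⊤ := by
  simp only [ne_eq, hv.eq_top_iff]
  exact_mod_cast Nat.cast_ne_zero.mpr (Nat.factorial_ne_zero j)

lemma aux_vK_inv {vK : K → TT} (hv : IsVal K vK) {y : K} (hy : y ≠ 0) :
    vK y⁻¹ = WithTop.map (fun r : ℝ => -r) (vK y) := by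
  have h := hv.map_mul y y⁻¹
  rw [mul_inv_cancel₀ hy, aux_vK_one hv] at h
  have hny : vK y ≠ ⊤ := by simp only [ne_eq, hv.eq_top_iff]; exact hy
  have hny' : vK y⁻¹ ≠ ⊤ := by simp only [ne_eq, hv.eq_top_iff]; exact inv_ne_zero hy
  obtain ⟨r, hr⟩ := WithTop.ne_top_iff_exists.mp hny
  obtain ⟨s, hs⟩ := WithTop.ne_top_iff_exists.mp hny'
  rw [← hr, ← hs] at h ⊢
  have h2 : (0 : ℝ) = r + s := by exact_mod_cast h
  have : s = -r := by linarith
  simp [this, WithTop.map_coe]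

/-- Ψ_trop is a bijection, with inverse S ↦ (constant coefficient of d_vʲ(S))_j,
and the square relating Ψ, Ψ_trop, v_K and ṽ commutes. -/
theorem psiTrop_bijective_and_square_commutes
    {K : Type} [Field K] [CharZero K]
    (vK : K → TT) (hv : IsVal K vK) {n : ℕ} :
    Function.Bijective (PsiTrop vK : (Fin n → ℕ → TT) → (Fin n → TSeries)) ∧
    (∀ S : Fin n → TSeries, PsiTrop vK (fun i j => ((dv vK)^[j] (S i)) 0) = S) ∧
    (∀ b : Fin n → ℕ → TT, (fun i j => ((dv vK)^[j] (PsiTrop vK b i)) 0) = b) ∧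
    (∀ a : Fin n → ℕ → K,
      (fun i => tropS vK (Psi a i)) = PsiTrop vK (fun i j => vK (a i j))) := by
  have hleft : ∀ S : Fin n → TSeries,
      PsiTrop vK (fun i j => ((dv vK)^[j] (S i)) 0) = S := by
    intro S
    funext i j
    obtain ⟨r, hr⟩ := WithTop.ne_top_iff_exists.mp (aux_vK_fact_ne_top hv (K := K) j)
    simp only [PsiTrop, aux_dv_iter hv, ← hr, WithTop.map_coe]
    rw [add_comm ((r : TT)) (S i j), add_assoc]
    cases hS : S i j using WithTop.recTopCoe with
    | top => simp
    | coe s => norm_cast; ring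
  have hright : ∀ b : Fin n → ℕ → TT,
      (fun i j => ((dv vK)^[j] (PsiTrop vK b i)) 0) = b := by
    intro b
    funext i j
    obtain ⟨r, hr⟩ := WithTop.ne_top_iff_exists.mp (aux_vK_fact_ne_top hv (K := K) j)
    simp only [aux_dv_iter hv, PsiTrop, ← hr, WithTop.map_coe]
    exact aux_cancel r (b i j)
  refine ⟨?_, hleft, hright, ?_⟩
  · constructor
    · intro b₁ b₂ h
      have := congrArg (fun S => (fun i j => ((dv vK)^[j] (S i)) 0)) h
      simpa [hright b₁, hright b₂] using this
    · intro S
      exact ⟨fun i j => ((dv vK)^[j] (S i)) 0, hleft S⟩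
  · intro a
    funext i j
    simp only [tropS, Psi, PowerSeries.coeff_mk, PsiTrop]
    rw [div_eq_mul_inv, hv.map_mul,
      aux_vK_inv hv (y := ((Nat.factorial j : ℕ) : K))
        (by exact_mod_cast Nat.cast_ne_zero.mpr (Nat.factorial_ne_zero j))]

end TropDiff
end
end

section
/- Let K be a field of characteristic 0 and I a differential ideal of K[[t]]{x₁,…,xₙ}, with f₁,…,f_s ∈ I whose common solution set equals Sol_{K[[t]]}(I). Then the map Ψ : (K^ℕ)ⁿ → K[[t]]ⁿ is a bijection, and Sol_{K[[t]]}(I) = Ψ(A_∞): the solutions of I in K[[t]] are exactly the images under Ψ of the points of the common zero locus A_∞ of the polynomials F_{l,r} = (dʳf_l)|_{t=0}. -/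
open scoped Classical ENNReal
open Filter
set_option synthInstance.maxHeartbeats 1000000
set_option maxHeartbeats 1000000

noncomputable section
namespace TropDiff

variable {K : Type} [Field K]

/-- d/dt on K[[t]]. -/
def psDeriv (g : PowerSeries K) : PowerSeries K :=
  PowerSeries.mk fun j => ((j + 1 : ℕ) : K) * PowerSeries.coeff (R := K) (j + 1) g

/-- The Ritt differential on K[[t]]{x₁,…,xₙ}: the unique derivation extending
d/dt on the coefficients and sending x_i^{(j)} to x_i^{(j+1)} (written out on
each monomial by the Leibniz rule). -/
def dDP {n : ℕ} (p : DP K n) : DP K n :=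
  p.support.sum (fun m => MvPolynomial.monomial m (psDeriv (MvPolynomial.coeff m p))) +
  p.support.sum (fun m => MvPolynomial.C (MvPolynomial.coeff m p) *
    m.support.sum (fun ij => m ij •
      (MvPolynomial.X (ij.1, ij.2 + 1) * MvPolynomial.monomial (m - Finsupp.single ij 1) 1)))

/-- Evaluation of a differential polynomial at an n-tuple of power series:
substitute (d/dt)ʲ(a i) for x_i^{(j)}.  `a` is a solution of `f` iff this is 0. -/
def evalSol {n : ℕ} (f : DP K n) (a : Fin n → PowerSeries K) : PowerSeries K :=
  MvPolynomial.eval (fun ij => psDeriv^[ij.2] (a ij.1)) f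

/-- F_{l,r} = (dʳ f_l)|_{t=0} ∈ K[x_i^{(j)}]. -/
def Flr {n s : ℕ} (fs : Fin s → DP K n) (l : Fin s) (r : ℕ) :
    MvPolynomial (Fin n × ℕ) K :=
  MvPolynomial.map (PowerSeries.constantCoeff (R := K)) (dDP^[r] (fs l))

/-- A_∞ ⊆ (K^ℕ)ⁿ: the common zero locus of all the F_{l,r}. -/
def Ainf {n s : ℕ} (fs : Fin s → DP K n) : Set (Fin n → ℕ → K) :=
  {x | ∀ (l : Fin s) (r : ℕ), MvPolynomial.eval (fun ij => x ij.1 ij.2) (Flr fs l r) = 0}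

/-- N_m: the least N such that every F_{l,r} with r ≤ m involves only the
variables x_i^{(j)} with j ≤ N (i.e. the largest j occurring). -/
def Nm {n s : ℕ} (fs : Fin s → DP K n) (m : ℕ) : ℕ :=
  Finset.sup (Finset.univ ×ˢ Finset.range (m + 1)) fun lr =>
    (Flr fs lr.1 lr.2).support.sup fun mon => mon.support.sup fun ij => ij.2

/-- A_m ⊆ (K^{N_m+1})ⁿ: the common zero locus of the F_{l,r} with r ≤ m, the
coordinate (i,j) being substituted for x_i^{(j)}. -/
def Am {n s : ℕ} (fs : Fin s → DP K n) (m : ℕ) : Set (Fin n → Fin (Nm fs m + 1) → K) :=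
  {x | ∀ (l : Fin s), ∀ r ≤ m, MvPolynomial.eval
    (fun ij => if h : ij.2 < Nm fs m + 1 then x ij.1 ⟨ij.2, h⟩ else 0) (Flr fs l r) = 0}

/-- The projection π_{(m,m′)} forgetting the coordinates (i,j) with j > N'. -/
def projN {n N N' : ℕ} (h : N' ≤ N) (x : Fin n → Fin (N + 1) → K) :
    Fin n → Fin (N' + 1) → K :=
  fun i j => x i (Fin.castLE (Nat.succ_le_succ h) j)

/-- The fiber (𝕍_m)_S^{v_K} of the tropicalization with respect to v_K:
v_K(x_{i,j}) = c_{i,j} + v_K(j!). -/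
def VmVal {n : ℕ} (vK : K → TT) (S : Fin n → TSeries) (N : ℕ) :
    Set (Fin n → Fin (N + 1) → K) :=
  {x | ∀ (i : Fin n) (j : Fin (N + 1)),
    vK (x i j) = S i (j : ℕ) + vK ((Nat.factorial (j : ℕ) : ℕ) : K)}

/-- The fiber (𝕍_m)_S^{v_triv} of the tropicalization with respect to the
trivial valuation: x_{i,j} = 0 iff c_{i,j} = ∞. -/
def VmTriv {n : ℕ} (S : Fin n → TSeries) (N : ℕ) : Set (Fin n → Fin (N + 1) → K) :=
  {x | ∀ (i : Fin n) (j : Fin (N + 1)), x i j = 0 ↔ S i (j : ℕ) = ⊤}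

/-- The fiber (𝕍_∞)_S^{v_K}. -/
def VinfVal {n : ℕ} (vK : K → TT) (S : Fin n → TSeries) : Set (Fin n → ℕ → K) :=
  {x | ∀ (i : Fin n) (j : ℕ), vK (x i j) = S i j + vK ((Nat.factorial j : ℕ) : K)}

/-- Zariski closed subsets of affine space (K^N)ⁿ: zero loci of collections of
polynomials. -/
def ZClosed {n N : ℕ} (C : Set (Fin n → Fin N → K)) : Prop :=
  ∃ T : Set (MvPolynomial (Fin n × Fin N) K),
    C = {x | ∀ p ∈ T, MvPolynomial.eval (fun ij => x ij.1 ij.2) p = 0}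

/-- Zariski constructible subsets: finite unions of differences of Zariski
closed sets. -/
def ZConstructible {n N : ℕ} (C : Set (Fin n → Fin N → K)) : Prop :=
  ∃ (k : ℕ) (Z W : Fin k → Set (Fin n → Fin N → K)),
    (∀ i, ZClosed (Z i)) ∧ (∀ i, ZClosed (W i)) ∧ C = ⋃ i, Z i \ W i

/-! ### Auxiliary lemmas -/

section Aux

variable {K : Type} [Field K]

lemma psDeriv_eq_derivative (g : PowerSeries K) :
    psDeriv g = PowerSeries.derivative K g := by
  ext j
  simp [psDeriv, PowerSeries.coeff_derivative, mul_comm]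

lemma psDeriv_zero : psDeriv (0 : PowerSeries K) = 0 := by
  rw [psDeriv_eq_derivative]; exact map_zero _

lemma constantCoeff_psDeriv_iterate (r : ℕ) (g : PowerSeries K) :
    PowerSeries.constantCoeff (R := K) (psDeriv^[r] g)
      = (Nat.factorial r : K) * PowerSeries.coeff (R := K) r g := by
  induction r generalizing g with
  | zero => simp [PowerSeries.coeff_zero_eq_constantCoeff]
  | succ r ih =>
    rw [Function.iterate_succ_apply, ih]
    have : PowerSeries.coeff (R := K) r (psDeriv g)
        = ((r + 1 : ℕ) : K) * PowerSeries.coeff (R := K) (r + 1) g := by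
      simp [psDeriv]
    rw [this, Nat.factorial_succ]
    push_cast
    ring

lemma eq_zero_of_constantCoeff_iterate [CharZero K] (g : PowerSeries K)
    (h : ∀ r, PowerSeries.constantCoeff (R := K) (psDeriv^[r] g) = 0) : g = 0 := by
  ext r
  have hr := h r
  rw [constantCoeff_psDeriv_iterate] at hr
  have hfac : ((Nat.factorial r : ℕ) : K) ≠ 0 :=
    Nat.cast_ne_zero.2 (Nat.factorial_ne_zero r)
  simpa [hfac] using hr

lemma D_prod {σ : Type} [DecidableEq σ] (s : Finset σ) (f : σ → PowerSeries K) :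
    PowerSeries.derivative K (∏ x ∈ s, f x)
      = ∑ x ∈ s, PowerSeries.derivative K (f x) * ∏ y ∈ s.erase x, f y := by
  induction s using Finset.induction_on with
  | empty => simp
  | @insert a s ha ih =>
    have h2 : ∀ x ∈ s, PowerSeries.derivative K (f x) * ∏ y ∈ (insert a s).erase x, f y
        = f a * (PowerSeries.derivative K (f x) * ∏ y ∈ s.erase x, f y) := by
      intro x hx
      rw [Finset.erase_insert_of_ne (by rintro rfl; exact ha hx),
        Finset.prod_insert (fun h => ha (Finset.mem_of_mem_erase h))]
      ring
    rw [Finset.prod_insert ha, Derivation.leibniz, smul_eq_mul, smul_eq_mul, ih,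
      Finset.sum_insert ha, Finset.erase_insert ha, Finset.sum_congr rfl h2,
      ← Finset.mul_sum]
    ring

lemma prod_sub_single {σ : Type} [DecidableEq σ] (g : σ → PowerSeries K)
    (d : σ →₀ ℕ) (x : σ) (hx : x ∈ d.support) :
    ((d - Finsupp.single x 1).prod fun i e => g i ^ e)
      = g x ^ (d x - 1) * ∏ y ∈ d.support.erase x, g y ^ d y := by
  rw [Finsupp.prod_of_support_subset _ Finsupp.support_tsub (fun i e => g i ^ e)
    (fun i _ => pow_zero (g i)),
    ← Finset.mul_prod_erase _ _ hx]
  congr 1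
  · congr 1
    rw [Finsupp.tsub_apply, Finsupp.single_eq_same]
  · refine Finset.prod_congr rfl fun y hy => ?_
    congr 1
    rw [Finsupp.tsub_apply, Finsupp.single_eq_of_ne' (Ne.symm (Finset.ne_of_mem_erase hy)),
      Nat.sub_zero]

lemma eval_dDP {n : ℕ} (g : Fin n × ℕ → PowerSeries K)
    (hg : ∀ ij : Fin n × ℕ, psDeriv (g ij) = g (ij.1, ij.2 + 1))
    (p : DP K n) :
    MvPolynomial.eval g (dDP p) = psDeriv (MvPolynomial.eval g p) := by
  classical
  have hD : psDeriv = ⇑(PowerSeries.derivative K) := funext psDeriv_eq_derivative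
  have hg' : ∀ ij : Fin n × ℕ,
      PowerSeries.derivative K (g ij) = g (ij.1, ij.2 + 1) := by
    intro ij; rw [← psDeriv_eq_derivative]; exact hg ij
  rw [hD]
  rw [dDP, map_add, map_sum, map_sum, MvPolynomial.eval_eq, map_sum,
    ← Finset.sum_add_distrib]
  refine Finset.sum_congr rfl fun d hd => ?_
  rw [hD, MvPolynomial.eval_monomial, map_mul, MvPolynomial.eval_C, map_sum,
    Derivation.leibniz, smul_eq_mul, smul_eq_mul, D_prod]
  have hterm : ∀ x ∈ d.support,
      MvPolynomial.eval g (d x • (MvPolynomial.X (x.1, x.2 + 1) *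
          MvPolynomial.monomial (d - Finsupp.single x 1) (1 : PowerSeries K)))
        = PowerSeries.derivative K (g x ^ d x) * ∏ y ∈ d.support.erase x, g y ^ d y := by
    intro x hx
    rw [map_nsmul, map_mul, MvPolynomial.eval_X, MvPolynomial.eval_monomial, one_mul,
      prod_sub_single g d x hx, Derivation.leibniz_pow, hg', smul_eq_mul, nsmul_eq_mul,
      nsmul_eq_mul]
    ring
  rw [Finset.sum_congr rfl hterm]
  rw [Finsupp.prod]
  ring

lemma evalSol_dDP {n : ℕ} (f : DP K n) (a : Fin n → PowerSeries K) :
    evalSol (dDP f) a = psDeriv (evalSol f a) := by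
  refine eval_dDP _ (fun ij => ?_) f
  exact (Function.iterate_succ_apply' psDeriv ij.2 (a ij.1)).symm

lemma evalSol_dDP_iterate {n : ℕ} (r : ℕ) (f : DP K n) (a : Fin n → PowerSeries K) :
    evalSol (dDP^[r] f) a = psDeriv^[r] (evalSol f a) := by
  induction r generalizing f with
  | zero => rfl
  | succ r ih =>
    rw [Function.iterate_succ_apply, ih, evalSol_dDP, ← Function.iterate_succ_apply]

lemma constantCoeff_evalSol {n : ℕ} (p : DP K n) (a : Fin n → PowerSeries K) :
    PowerSeries.constantCoeff (R := K) (evalSol p a)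
      = MvPolynomial.eval
          (fun ij : Fin n × ℕ => PowerSeries.constantCoeff (R := K) (psDeriv^[ij.2] (a ij.1)))
          (MvPolynomial.map (PowerSeries.constantCoeff (R := K)) p) := by
  rw [MvPolynomial.eval_map, evalSol]
  have : MvPolynomial.eval (fun ij : Fin n × ℕ => psDeriv^[ij.2] (a ij.1)) p
      = MvPolynomial.eval₂ (RingHom.id _) (fun ij : Fin n × ℕ => psDeriv^[ij.2] (a ij.1)) p := by
    rfl
  rw [this, MvPolynomial.eval₂_comp_left (PowerSeries.constantCoeff (R := K))]
  rfl

lemma Psi_left_inv [CharZero K] {n : ℕ} (a : Fin n → PowerSeries K) :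
    Psi (fun i j => ((Nat.factorial j : ℕ) : K) * PowerSeries.coeff (R := K) j (a i)) = a := by
  funext i
  ext j
  have hfac : ((Nat.factorial j : ℕ) : K) ≠ 0 :=
    Nat.cast_ne_zero.2 (Nat.factorial_ne_zero j)
  simp only [Psi, PowerSeries.coeff_mk]
  rw [mul_comm, mul_div_assoc, div_self hfac, mul_one]

lemma constantCoeff_iterate_Psi [CharZero K] {n : ℕ} (x : Fin n → ℕ → K)
    (i : Fin n) (j : ℕ) :
    PowerSeries.constantCoeff (R := K) (psDeriv^[j] (Psi x i)) = x i j := by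
  have hfac : ((Nat.factorial j : ℕ) : K) ≠ 0 :=
    Nat.cast_ne_zero.2 (Nat.factorial_ne_zero j)
  rw [constantCoeff_psDeriv_iterate]
  simp only [Psi, PowerSeries.coeff_mk]
  rw [mul_comm, div_mul_cancel₀ _ hfac]

end Aux

/-- Ψ is a bijection and the solution set of I in K[[t]] is exactly Ψ(A_∞). -/
theorem solutions_eq_image_of_Ainf
    {K : Type} [Field K] [CharZero K]
    {n : ℕ} (I : Ideal (DP K n)) (hdiff : ∀ f ∈ I, dDP f ∈ I)
    {s : ℕ} (fs : Fin s → DP K n) (hmem : ∀ l, fs l ∈ I)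
    (hsol : ∀ a : Fin n → PowerSeries K,
      (∀ f ∈ I, evalSol f a = 0) ↔ (∀ l, evalSol (fs l) a = 0)) :
    Function.Bijective (Psi : (Fin n → ℕ → K) → (Fin n → PowerSeries K)) ∧
    {a : Fin n → PowerSeries K | ∀ f ∈ I, evalSol f a = 0} = Psi '' Ainf fs := by
  have hfac : ∀ j : ℕ, ((Nat.factorial j : ℕ) : K) ≠ 0 :=
    fun j => Nat.cast_ne_zero.2 (Nat.factorial_ne_zero j)
  constructor
  · constructor
    · intro x y hxy
      funext i j
      have h := congrArg (fun f : Fin n → PowerSeries K => PowerSeries.coeff (R := K) j (f i)) hxy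
      simp only [Psi, PowerSeries.coeff_mk] at h
      have h2 := congrArg (fun c : K => c * ((Nat.factorial j : ℕ) : K)) h
      simpa [div_mul_cancel₀, hfac j] using h2
    · intro a
      exact ⟨_, Psi_left_inv a⟩
  · ext a
    simp only [Set.mem_setOf_eq, hsol a, Set.mem_image]
    constructor
    · intro h
      refine ⟨fun i j => ((Nat.factorial j : ℕ) : K) * PowerSeries.coeff (R := K) j (a i),
        ?_, Psi_left_inv a⟩
      intro l r
      have key : (fun ij : Fin n × ℕ =>
            ((Nat.factorial ij.2 : ℕ) : K) * PowerSeries.coeff (R := K) ij.2 (a ij.1))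
          = fun ij : Fin n × ℕ =>
            PowerSeries.constantCoeff (R := K) (psDeriv^[ij.2] (a ij.1)) := by
        funext ij; rw [constantCoeff_psDeriv_iterate]
      show MvPolynomial.eval _ (Flr fs l r) = 0
      rw [Flr, key, ← constantCoeff_evalSol, evalSol_dDP_iterate, h l,
        Function.iterate_fixed psDeriv_zero]
      exact map_zero _
    · rintro ⟨x, hx, rfl⟩ l
      apply eq_zero_of_constantCoeff_iterate
      intro r
      rw [← evalSol_dDP_iterate, constantCoeff_evalSol]
      have h := hx l r
      rw [Flr] at h
      have key : (fun ij : Fin n × ℕ =>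
            PowerSeries.constantCoeff (R := K) (psDeriv^[ij.2] (Psi x ij.1)))
          = fun ij : Fin n × ℕ => x ij.1 ij.2 := by
        funext ij; exact constantCoeff_iterate_Psi x ij.1 ij.2
      rw [key]
      exact h

end TropDiff
end
end
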